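/- arXiv:math/0703138 — 4 statements merged into one kernel-verified Lean document; each statement's English description precedes it below -/
import Mathlib

section
/- Let m be a positive integer, κ > 0, c ≤ 0, and define φ(τ) = (κ(1+τ))/(m+1) + (1/(1+τ)^m)(−κτ − κ/(m+1)) − (c(1+τ)²)/((m+1)(m+2)) + (c/(1+τ)^m)(τ/(m+1) + 1/((m+1)(m+2))). Then φ(τ) > 0 for all τ > 0. -/
theorem profile_positive_of_kappa_pos_c_nonpos
    (m : ℕ) (hm : 0 < m) (κ c : ℝ) (hκ : 0 < κ) (hc : c ≤ 0)
    (φ : ℝ → ℝ)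
    (hφ : ∀ τ : ℝ, φ τ = κ * (1 + τ) / (m + 1)
        + (1 / (1 + τ) ^ m) * (-κ * τ - κ / (m + 1))
        - c * (1 + τ) ^ 2 / ((m + 1) * (m + 2))
        + (c / (1 + τ) ^ m) * (τ / (m + 1) + 1 / ((m + 1) * (m + 2)))) :
    ∀ τ : ℝ, 0 < τ → 0 < φ τ := by
  intro τ hτ
  have hτ1 : (0:ℝ) < 1 + τ := by linarith
  have hp : (0:ℝ) < (1 + τ) ^ m := pow_pos hτ1 m
  have hm1 : (1:ℝ) ≤ (m:ℝ) := by exact_mod_cast hm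
  have hb : 1 + (m:ℝ) * τ ≤ (1 + τ) ^ m := one_add_mul_le_pow (by linarith) m
  -- strict Bernoulli for m+1 and nonstrict for m+2
  have h1 : 1 + ((m:ℝ) + 1) * τ < (1 + τ) ^ (m + 1) := by
    have : (1 + τ) ^ (m + 1) = (1 + τ) ^ m * (1 + τ) := pow_succ _ _
    rw [this]
    nlinarith [mul_pos hτ hτ]
  have h2 : 1 + ((m:ℝ) + 2) * τ ≤ (1 + τ) ^ (m + 2) := by
    have : (1 + τ) ^ (m + 2) = (1 + τ) ^ m * ((1 + τ) * (1 + τ)) := by ring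
    rw [this]
    nlinarith [mul_pos hτ hτ]
  have hm0 : (0:ℝ) < (m:ℝ) + 1 := by linarith
  have hm2 : (0:ℝ) < (m:ℝ) + 2 := by linarith
  have hrepr : φ τ = (κ * ((m:ℝ) + 2) * ((1 + τ) ^ (m + 1) - ((m:ℝ) + 1) * τ - 1)
      + (-c) * ((1 + τ) ^ (m + 2) - ((m:ℝ) + 2) * τ - 1))
      / (((m:ℝ) + 1) * ((m:ℝ) + 2) * (1 + τ) ^ m) := by
    rw [hφ]
    have e1 : (1 + τ) ^ (m + 1) = (1 + τ) ^ m * (1 + τ) := pow_succ _ _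
    have e2 : (1 + τ) ^ (m + 2) = (1 + τ) ^ m * ((1 + τ) * (1 + τ)) := by ring
    rw [e1, e2]
    field_simp
    ring
  rw [hrepr]
  apply div_pos
  · have t1 : 0 < κ * ((m:ℝ) + 2) * ((1 + τ) ^ (m + 1) - ((m:ℝ) + 1) * τ - 1) := by
      apply mul_pos (mul_pos hκ hm2); linarith
    have t2 : 0 ≤ (-c) * ((1 + τ) ^ (m + 2) - ((m:ℝ) + 2) * τ - 1) := by
      apply mul_nonneg (by linarith); linarith
    linarith
  · positivity
end

section
/- Let m be a positive integer and c < 0, and define φ(τ) = −(c(1+τ)²)/((m+1)(m+2)) + (c/(1+τ)^m)(τ/(m+1) + 1/((m+1)(m+2))). Then φ(τ) > 0 for all τ > 0. -/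
theorem profile_positive_null_case
    (m : ℕ) (hm : 0 < m) (c : ℝ) (hc : c < 0)
    (φ : ℝ → ℝ)
    (hφ : ∀ τ : ℝ, φ τ = -(c * (1 + τ) ^ 2) / ((m + 1) * (m + 2))
        + (c / (1 + τ) ^ m) * (τ / (m + 1) + 1 / ((m + 1) * (m + 2)))) :
    ∀ τ : ℝ, 0 < τ → 0 < φ τ := by
  intro τ hτ
  have h1 : (0:ℝ) < 1 + τ := by linarith
  have hP : (0:ℝ) < (1 + τ) ^ m := pow_pos h1 m
  have hm1 : (0:ℝ) < (m:ℝ) + 1 := by positivity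
  have hm2 : (0:ℝ) < (m:ℝ) + 2 := by positivity
  have hb : 1 + (m:ℝ) * τ ≤ (1 + τ) ^ m := one_add_mul_le_pow (by linarith) m
  have key : 1 + ((m:ℝ) + 2) * τ < (1 + τ) ^ m * (1 + τ) ^ 2 := by
    nlinarith [sq_nonneg τ, mul_pos hτ hτ, (Nat.cast_pos (α := ℝ)).mpr hm]
  have heq : φ τ = (-c) * ((1 + τ) ^ m * (1 + τ) ^ 2 - (1 + ((m:ℝ) + 2) * τ)) /
      ((1 + τ) ^ m * (((m:ℝ) + 1) * ((m:ℝ) + 2))) := by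
    rw [hφ τ]
    field_simp
    ring
  rw [heq]
  apply div_pos
  · have : 0 < -c := by linarith
    nlinarith
  · positivity
end

section
/- Let m be a positive integer, p, k positive integers, κ = 2p/k, c ≤ 0, and define φ(τ) = (κ/(m+1))(1+τ) − ((κ−2)(m+1)τ + κ)/((1+τ)^m (m+1)) + (c/((m+1)(m+2)))·(((m+2)τ + 1)/(1+τ)^m − (1+τ)²). Then φ(0) = 0, φ'(0) = 2, and φ(τ) > 0 for all τ > 0. -/
/-!
Write `φ = baseProfile κ m + c / ((m + 1) * (m + 2)) * profileCorrection m`. Both pieces vanish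
at `0`, with slopes `2` and `0`. For `τ > 0` Bernoulli's inequality `1 + n τ ≤ (1 + τ) ^ n` gives
`κ (1 + τ) ^ (m + 1) ≥ κ + κ (m + 1) τ > κ + (κ - 2) (m + 1) τ`, i.e. `baseProfile κ m τ > 0`,
and `(1 + τ) ^ (m + 2) ≥ 1 + (m + 2) τ`, i.e. `profileCorrection m τ ≤ 0`; since `c ≤ 0` the
correction term is nonnegative.
-/

noncomputable section

namespace ProfileWithInitialSlopeTwo

variable (κ : ℝ) (m : ℕ)

def baseProfile (τ : ℝ) : ℝ :=
  κ / (m + 1) * (1 + τ) - ((κ - 2) * (m + 1) * τ + κ) / ((1 + τ) ^ m * (m + 1))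

def profileCorrection (τ : ℝ) : ℝ :=
  ((m + 2) * τ + 1) / (1 + τ) ^ m - (1 + τ) ^ 2

theorem baseProfile_zero : baseProfile κ m 0 = 0 := by
  simp [baseProfile]

theorem profileCorrection_zero : profileCorrection m 0 = 0 := by
  simp [profileCorrection]

theorem hasDerivAt_baseProfile_zero : HasDerivAt (baseProfile κ m) 2 0 := by
  have hm : (m : ℝ) + 1 ≠ 0 := by positivity
  have hshift : HasDerivAt (fun τ : ℝ => 1 + τ) 1 0 := (hasDerivAt_id 0).const_add 1
  have hnum : HasDerivAt (fun τ : ℝ => (κ - 2) * (m + 1) * τ + κ) ((κ - 2) * (m + 1)) 0 := by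
    simpa using ((hasDerivAt_id (0 : ℝ)).const_mul ((κ - 2) * (m + 1))).add_const κ
  have hden : HasDerivAt (fun τ : ℝ => (1 + τ) ^ m * (m + 1)) (m * (m + 1)) 0 := by
    simpa using (hshift.fun_pow m).mul_const ((m : ℝ) + 1)
  refine ((hshift.const_mul (κ / (m + 1))).fun_sub
    (hnum.fun_div hden (by simpa using hm))).congr_deriv ?_
  field_simp
  ring

theorem hasDerivAt_profileCorrection_zero : HasDerivAt (profileCorrection m) 0 0 := by
  have hshift : HasDerivAt (fun τ : ℝ => 1 + τ) 1 0 := (hasDerivAt_id 0).const_add 1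
  have hnum : HasDerivAt (fun τ : ℝ => (m + 2) * τ + 1) (m + 2) 0 := by
    simpa using ((hasDerivAt_id (0 : ℝ)).const_mul ((m : ℝ) + 2)).add_const 1
  exact ((hnum.fun_div (hshift.fun_pow m) (by simp)).fun_sub
    (hshift.fun_pow 2)).congr_deriv (by simp)

variable {κ m}

theorem baseProfile_pos (hκ : 0 ≤ κ) {τ : ℝ} (hτ : 0 < τ) : 0 < baseProfile κ m τ := by
  have hbernoulli : 1 + (m + 1 : ℕ) * τ ≤ (1 + τ) ^ (m + 1) :=
    one_add_mul_le_pow (by linarith) (m + 1)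
  push_cast at hbernoulli
  rw [baseProfile, sub_pos, div_lt_iff₀ (by positivity)]
  calc (κ - 2) * (m + 1) * τ + κ < κ * (1 + (m + 1) * τ) := by nlinarith
    _ ≤ κ * (1 + τ) ^ (m + 1) := mul_le_mul_of_nonneg_left hbernoulli hκ
    _ = κ / (m + 1) * (1 + τ) * ((1 + τ) ^ m * (m + 1)) := by field_simp; ring

theorem profileCorrection_nonpos {τ : ℝ} (hτ : 0 ≤ τ) : profileCorrection m τ ≤ 0 := by
  have hbernoulli : 1 + (m + 2 : ℕ) * τ ≤ (1 + τ) ^ (m + 2) :=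
    one_add_mul_le_pow (by linarith) (m + 2)
  push_cast at hbernoulli
  rw [profileCorrection, sub_nonpos, div_le_iff₀ (by positivity), ← pow_add, add_comm 2]
  linarith

end ProfileWithInitialSlopeTwo

end

open ProfileWithInitialSlopeTwo

theorem profile_with_initial_slope_two_general
    (m p k : ℕ)
    (κ c : ℝ) (hκ : κ = 2 * p / k) (hc : c ≤ 0)
    (φ : ℝ → ℝ)
    (hφ : ∀ τ : ℝ, φ τ = κ / (m + 1) * (1 + τ)
        - ((κ - 2) * (m + 1) * τ + κ) / ((1 + τ) ^ m * (m + 1))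
        + c / ((m + 1) * (m + 2)) * (((m + 2) * τ + 1) / (1 + τ) ^ m - (1 + τ) ^ 2)) :
    φ 0 = 0 ∧ deriv φ 0 = 2 ∧ ∀ τ : ℝ, 0 < τ → 0 < φ τ := by
  set a := c / ((m + 1) * (m + 2))
  have hsplit : φ = fun τ => baseProfile κ m τ + a * profileCorrection m τ := funext hφ
  have hκ_nonneg : 0 ≤ κ := by rw [hκ]; positivity
  have ha_nonpos : a ≤ 0 := div_nonpos_of_nonpos_of_nonneg hc (by positivity)
  subst hsplit
  refine ⟨by simp [baseProfile_zero, profileCorrection_zero], ?_, fun τ hτ => ?_⟩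
  · simpa using ((hasDerivAt_baseProfile_zero κ m).fun_add
      ((hasDerivAt_profileCorrection_zero m).const_mul a)).deriv
  · exact add_pos_of_pos_of_nonneg (baseProfile_pos hκ_nonneg hτ)
      (mul_nonneg_of_nonpos_of_nonpos ha_nonpos (profileCorrection_nonpos hτ.le))

theorem profile_with_initial_slope_two
    (m p k : ℕ) (hm : 0 < m) (hp : 0 < p) (hk : 0 < k)
    (κ c : ℝ) (hκ : κ = 2 * p / k) (hc : c ≤ 0)
    (φ : ℝ → ℝ)
    (hφ : ∀ τ : ℝ, φ τ = κ / (m + 1) * (1 + τ)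
        - ((κ - 2) * (m + 1) * τ + κ) / ((1 + τ) ^ m * (m + 1))
        + c / ((m + 1) * (m + 2)) * (((m + 2) * τ + 1) / (1 + τ) ^ m - (1 + τ) ^ 2)) :
    φ 0 = 0 ∧ deriv φ 0 = 2 ∧ ∀ τ : ℝ, 0 < τ → 0 < φ τ :=
  profile_with_initial_slope_two_general m p k κ c hκ hc φ hφ
end

section
/- Let m be a positive integer, κ < 0, and for each real c define φ_c(τ) = (κ/(m+1))(1+τ) + (1/((m+1)(1+τ)^m))(−κ(m+1)τ − κ) − (c(1+τ)²)/((m+1)(m+2)) + (c/(1+τ)^m)(τ/(m+1) + 1/((m+1)(m+2))). Then there exists c' < 0 such that for all c < c', φ_c(τ) > 0 for all τ > 0. -/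
theorem exists_negative_c_with_positive_profile
    (m : ℕ) (hm : 0 < m) (κ : ℝ) (hκ : κ < 0)
    (φ : ℝ → ℝ → ℝ)
    (hφ : ∀ c τ : ℝ, φ c τ = κ / (m + 1) * (1 + τ)
        + (1 / ((m + 1) * (1 + τ) ^ m)) * (-κ * (m + 1) * τ - κ)
        - c * (1 + τ) ^ 2 / ((m + 1) * (m + 2))
        + (c / (1 + τ) ^ m) * (τ / (m + 1) + 1 / ((m + 1) * (m + 2)))) :
    ∃ c' : ℝ, c' < 0 ∧ ∀ c : ℝ, c < c' → ∀ τ : ℝ, 0 < τ → 0 < φ c τ := by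
  refine ⟨(m + 2) * κ, mul_neg_of_pos_of_neg (by positivity) hκ, ?_⟩
  intro c hc τ hτ
  have hs : (0:ℝ) < 1 + τ := by linarith
  have hsm : (0:ℝ) < (1 + τ) ^ m := pow_pos hs m
  set P : ℝ := (1 + τ) ^ (m + 1) - ((m + 1) * τ + 1) with hPdef
  set Q : ℝ := (1 + τ) ^ (m + 2) - ((m + 2) * τ + 1) with hQdef
  -- Bernoulli: (1+τ)^m ≥ 1 + m τ
  have hber : 1 + (m : ℝ) * τ ≤ (1 + τ) ^ m := one_add_mul_le_pow (by linarith) m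
  have hP : 0 < P := by
    have h1 : (1 + τ) ^ (m + 1) = (1 + τ) ^ m * (1 + τ) := pow_succ _ _
    have hm1 : (1:ℝ) ≤ (m : ℝ) := by exact_mod_cast hm
    nlinarith [mul_pos hτ hτ]
  have hQP : P ≤ Q := by
    have h1 : (1 + τ) ^ (m + 2) = (1 + τ) ^ (m + 1) * (1 + τ) := pow_succ _ _
    have h2 : (1:ℝ) ≤ (1 + τ) ^ (m + 1) := one_le_pow₀ (by linarith : (1:ℝ) ≤ 1 + τ)
    nlinarith
  have hden : (0:ℝ) < ((m:ℝ) + 1) * ((m:ℝ) + 2) * (1 + τ) ^ m := by positivity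
  have key : φ c τ = ((m + 2) * κ * P - c * Q) / (((m:ℝ) + 1) * ((m:ℝ) + 2) * (1 + τ) ^ m) := by
    rw [hφ, hPdef, hQdef, eq_div_iff (ne_of_gt hden)]
    have e1 : (1 + τ) ^ (m + 1) = (1 + τ) ^ m * (1 + τ) := pow_succ _ _
    have e2 : (1 + τ) ^ (m + 2) = (1 + τ) ^ m * (1 + τ) * (1 + τ) := by
      rw [pow_succ, pow_succ]
    field_simp
    ring
  rw [key]
  apply div_pos _ hden
  have h1 : c * Q ≤ c * P := mul_le_mul_of_nonpos_left hQP (by nlinarith)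
  nlinarith
end
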